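/- arXiv:1811.04188 — 2 statements merged into one kernel-verified Lean document; each statement's English description precedes it below -/
import Mathlib

section
/- Let f = Γ'/Γ be the digamma function and set c_n = n(n-1)/2. Define meromorphic functions ε_n inductively by ε₁ = 0 and ε_{n+1} = ε_n + ε_n'/f + [(n-2)·f'/f² + f''/(f·f')]·(c_n + ε_n) for n ≥ 1. Then for every n ≥ 1, the identity Γ^{(n)}/Γ = fⁿ·[1 + (f'/f²)·(c_n + ε_n)] holds at every z ∈ ℂ where both sides are defined (i.e. away from the poles of Γ and the zeros of f, f', and Γ). -/
/-- The digamma function `f = Γ'/Γ`. -/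
noncomputable def digammaFn : ℂ → ℂ := fun z => deriv Complex.Gamma z / Complex.Gamma z

/-- The error terms `ε_n`, defined by `ε₁ = 0` and
`ε_{n+1} = ε_n + ε_n'/f + [(n-2)·f'/f² + f''/(f·f')]·(c_n + ε_n)` for `n ≥ 1`,
where `c_n = n(n-1)/2`. (The value at `0` is junk.) -/
noncomputable def epsFn : ℕ → ℂ → ℂ
  | 0 => 0
  | 1 => 0
  | (n + 2) => fun z =>
      epsFn (n + 1) z + deriv (epsFn (n + 1)) z / digammaFn z +
        ((((n : ℂ) + 1) - 2) * deriv digammaFn z / (digammaFn z) ^ 2 +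
            deriv (deriv digammaFn) z / (digammaFn z * deriv digammaFn z)) *
          (((n : ℂ) + 1) * (((n : ℂ) + 1) - 1) / 2 + epsFn (n + 1) z)

/-! Since `Γ' = Γ f`, differentiating `Γ^{(n)} = Γ (fⁿ + fⁿ⁻² f' (c_n + ε_n))` once
gives `Γ f^{n+1} (1 + (f'/f²)(c_n + n + ε_{n+1}))`, and `c_n + n = c_{n+1}`: the recurrence for `ε` is
exactly what the product rule produces. That recurrence also holds at `n = 0`, so the induction
starts from `Γ^{(0)} = Γ`. All functions involved are holomorphic on the open set where `Γ`, `f`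
and `f'` do not vanish, so derivatives there may be computed locally. -/

open Complex Topology

/-- Mathlib's `Gamma` has no zeros and takes the junk value `0` at its poles, so this is the
complement of the poles. -/
lemma Complex.isOpen_setOf_Gamma_ne_zero : IsOpen {z : ℂ | Gamma z ≠ 0} := by
  simpa only [ne_eq, inv_eq_zero] using
    isOpen_ne_fun differentiable_one_div_Gamma.continuous (continuous_const (y := 0))

lemma Complex.analyticOnNhd_Gamma : AnalyticOnNhd ℂ Gamma {z | Gamma z ≠ 0} := by
  refine DifferentiableOn.analyticOnNhd (fun z hz => ?_) isOpen_setOf_Gamma_ne_zero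
  refine (differentiableAt_Gamma z fun m hm => hz ?_).differentiableWithinAt
  exact (Gamma_eq_zero_iff z).2 ⟨m, hm⟩

lemma analyticOnNhd_digammaFn : AnalyticOnNhd ℂ digammaFn {z | Gamma z ≠ 0} :=
  analyticOnNhd_Gamma.deriv.div analyticOnNhd_Gamma fun _ hz => hz

lemma hasDerivAt_Gamma_mul_digammaFn {z : ℂ} (hz : Gamma z ≠ 0) :
    HasDerivAt Gamma (Gamma z * digammaFn z) z := by
  rw [digammaFn, mul_div_cancel₀ _ hz]
  exact (analyticOnNhd_Gamma z hz).differentiableAt.hasDerivAt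

lemma epsFn_succ (n : ℕ) (z : ℂ) :
    epsFn (n + 1) z = epsFn n z + deriv (epsFn n) z / digammaFn z +
      (((n : ℂ) - 2) * deriv digammaFn z / digammaFn z ^ 2 +
          deriv (deriv digammaFn) z / (digammaFn z * deriv digammaFn z)) *
        ((n : ℂ) * ((n : ℂ) - 1) / 2 + epsFn n z) := by
  cases n with
  | zero => simp [epsFn]
  | succ n => simp [epsFn]

def gammaRatioDomain : Set ℂ :=
  {z | Gamma z ≠ 0 ∧ digammaFn z ≠ 0 ∧ deriv digammaFn z ≠ 0}

lemma gammaRatioDomain_subset : gammaRatioDomain ⊆ {z | Gamma z ≠ 0} := fun _ hz => hz.1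

lemma isOpen_gammaRatioDomain : IsOpen gammaRatioDomain := by
  have hf := analyticOnNhd_digammaFn.continuousOn
  have hf' := analyticOnNhd_digammaFn.deriv.continuousOn
  have hne : IsOpen ({0}ᶜ : Set ℂ) := isOpen_compl_singleton
  have := (hf.isOpen_inter_preimage isOpen_setOf_Gamma_ne_zero hne).inter
    (hf'.isOpen_inter_preimage isOpen_setOf_Gamma_ne_zero hne)
  convert this using 1
  ext z
  simp only [gammaRatioDomain, Set.mem_ofPred_eq, Set.mem_inter_iff, Set.mem_preimage,
    Set.mem_compl_singleton_iff]
  tauto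

lemma analyticOnNhd_epsFn (n : ℕ) : AnalyticOnNhd ℂ (epsFn n) gammaRatioDomain := by
  have hf := analyticOnNhd_digammaFn.mono gammaRatioDomain_subset
  induction n with
  | zero => exact fun _ _ => analyticAt_const
  | succ n ih =>
    rw [funext (epsFn_succ n)]
    intro z hz
    have ⟨_, hf0, hf'0⟩ := hz
    exact ((ih z hz).add ((ih.deriv z hz).div (hf z hz) hf0)).add
      ((((analyticAt_const.mul (hf.deriv z hz)).div ((hf z hz).pow 2) (pow_ne_zero 2 hf0)).add
        ((hf.deriv.deriv z hz).div ((hf z hz).mul (hf.deriv z hz)) (mul_ne_zero hf0 hf'0))).mul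
        (analyticAt_const.add (ih z hz)))

theorem HasDerivAt.mul_pow_mul_one_add {g f φ ε : ℂ → ℂ} {z φ' ε' c : ℂ} (k : ℕ)
    (hg : HasDerivAt g (g z * f z) z) (hf : HasDerivAt f (φ z) z) (hφ : HasDerivAt φ φ' z)
    (hε : HasDerivAt ε ε' z) (hf0 : f z ≠ 0) (hφ0 : φ z ≠ 0) :
    HasDerivAt (fun w => g w * (f w ^ k * (1 + φ w / f w ^ 2 * (c + ε w))))
      (g z * (f z ^ (k + 1) * (1 + φ z / f z ^ 2 * (c + k + (ε z + ε' / f z +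
        (((k : ℂ) - 2) * φ z / f z ^ 2 + φ' / (f z * φ z)) * (c + ε z)))))) z := by
  -- `k - 1` is truncated, harmlessly since it comes with the factor `k`
  have hpow : (k : ℂ) * f z ^ (k - 1) = k * f z ^ k / f z := by
    rcases k with _ | k
    · simp
    · field_simp
      rw [Nat.add_sub_cancel, pow_succ]
  have hratio := ((hφ.div (hf.pow 2) (pow_ne_zero 2 hf0)).mul (hε.const_add c)).const_add 1
  refine (hg.mul ((hf.pow k).mul hratio)).congr_deriv ?_
  simp only [Pi.mul_apply, Pi.pow_apply, Pi.div_apply, Nat.cast_ofNat, hpow]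
  field_simp
  ring

theorem iteratedDeriv_Gamma_eq (n : ℕ) {z : ℂ} (hz : z ∈ gammaRatioDomain) :
    iteratedDeriv n Gamma z = Gamma z * (digammaFn z ^ n *
      (1 + deriv digammaFn z / digammaFn z ^ 2 *
        ((n : ℂ) * ((n : ℂ) - 1) / 2 + epsFn n z))) := by
  induction n generalizing z with
  | zero => simp [epsFn]
  | succ n ih =>
    have hf := analyticOnNhd_digammaFn.mono gammaRatioDomain_subset
    have hstep := HasDerivAt.mul_pow_mul_one_add (c := (n : ℂ) * ((n : ℂ) - 1) / 2) n
      (hasDerivAt_Gamma_mul_digammaFn hz.1)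
      (hf z hz).differentiableAt.hasDerivAt (hf.deriv z hz).differentiableAt.hasDerivAt
      (analyticOnNhd_epsFn n z hz).differentiableAt.hasDerivAt hz.2.1 hz.2.2
    have hnhds : iteratedDeriv n Gamma =ᶠ[𝓝 z] fun w => Gamma w * (digammaFn w ^ n *
        (1 + deriv digammaFn w / digammaFn w ^ 2 * ((n : ℂ) * ((n : ℂ) - 1) / 2 + epsFn n w))) :=
      Filter.eventually_of_mem (isOpen_gammaRatioDomain.mem_nhds hz) fun w hw => ih hw
    rw [iteratedDeriv_succ, hnhds.deriv_eq, hstep.deriv, epsFn_succ]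
    push_cast
    ring

theorem gamma_ratio_formula_general (n : ℕ) (z : ℂ)
    (hΓ : Complex.Gamma z ≠ 0)
    (hf : digammaFn z ≠ 0) (hf' : deriv digammaFn z ≠ 0) :
    iteratedDeriv n Complex.Gamma z / Complex.Gamma z =
      (digammaFn z) ^ n *
        (1 + deriv digammaFn z / (digammaFn z) ^ 2 *
          ((n : ℂ) * ((n : ℂ) - 1) / 2 + epsFn n z)) := by
  rw [iteratedDeriv_Gamma_eq n ⟨hΓ, hf, hf'⟩, mul_div_cancel_left₀ _ hΓ]

/-- For every `n ≥ 1`, `Γ^{(n)}/Γ = fⁿ·[1 + (f'/f²)·(c_n + ε_n)]` with `c_n = n(n-1)/2`,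
at every point away from the poles of `Γ` and the zeros of `f`, `f'` and `Γ`. -/
theorem gamma_ratio_formula (n : ℕ) (hn : 1 ≤ n) (z : ℂ)
    (hz : ∀ k : ℕ, z ≠ -(k : ℂ)) (hΓ : Complex.Gamma z ≠ 0)
    (hf : digammaFn z ≠ 0) (hf' : deriv digammaFn z ≠ 0) :
    iteratedDeriv n Complex.Gamma z / Complex.Gamma z =
      (digammaFn z) ^ n *
        (1 + deriv digammaFn z / (digammaFn z) ^ 2 *
          ((n : ℂ) * ((n : ℂ) - 1) / 2 + epsFn n z)) :=
  gamma_ratio_formula_general n z hΓ hf hf'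
end

section
/- For every z ∈ ℂ with Re z > 0, the digamma function satisfies f(z) = Γ'(z)/Γ(z) = log z − 1/(2z) − ∫₀^{+∞} (⌊t⌋ − t + 1/2)/(t+z)² dt. -/
/-!
Differentiating Euler's limit formula `Γ(s) = lim GammaSeq s n` gives Gauss's formula
`ψ(z) = lim (log n - ∑_{j ≤ n} 1 / (z + j))`; differentiation is legitimate because the
convergence is locally uniform on `0 < re s`: the error is an integral against
`t ^ (s - 1)` with a kernel of constant sign, and `|t ^ (s - 1)| ≤ t ^ (a - 1) + t ^ (b - 1)` for
`a ≤ re s ≤ b`, so on a vertical strip the error is dominated by the errors at the two real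
edges, which tend to zero.

On `[j, j + 1]` the sawtooth `⌊t⌋ - t + 1/2` is affine, so its integral against `(t + z)⁻²` is
elementary, and summing gives `∫₀ⁿ = ∑_{j ≤ n} 1/(z+j) - (1/z + 1/(z+n))/2 - log (z+n) + log z`.
Hence `log z - 1/(2z) - ∫₀ⁿ` differs from Gauss's sequence by `log (z+n) - log n + 1/(2(z+n))`,
which tends to zero.
-/

open Complex Filter MeasureTheory Set Topology

lemma Real.rpow_le_rpow_add_rpow {a b c t : ℝ} (ht : 0 < t) (hac : a ≤ c) (hcb : c ≤ b) :
    t ^ c ≤ t ^ a + t ^ b := by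
  rcases le_total t 1 with h | h
  · linarith [Real.rpow_le_rpow_of_exponent_ge ht h hac, Real.rpow_nonneg ht.le b]
  · linarith [Real.rpow_le_rpow_of_exponent_le h hcb, Real.rpow_nonneg ht.le a]

namespace Complex

lemma add_natCast_ne_zero {z : ℂ} (hz : 0 < z.re) (j : ℕ) : z + j ≠ 0 :=
  ne_zero_of_re_pos (by simpa using add_pos_of_pos_of_nonneg hz j.cast_nonneg)

lemma differentiableOn_GammaSeq {n : ℕ} (hn : n ≠ 0) :
    DifferentiableOn ℂ (GammaSeq · n) {s | 0 < s.re} := by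
  refine DifferentiableOn.div ?_ ?_ fun s hs ↦ ?_
  · exact ((differentiable_id.const_cpow (.inl (Nat.cast_ne_zero.mpr hn))).mul_const _)
      |>.differentiableOn
  · exact (Differentiable.fun_finsetProd fun j _ ↦ differentiable_id.add_const _).differentiableOn
  · exact Finset.prod_ne_zero_iff.mpr fun j _ ↦ add_natCast_ne_zero hs j

lemma logDeriv_GammaSeq {z : ℂ} (hz : ∀ j : ℕ, z + j ≠ 0) {n : ℕ} (hn : n ≠ 0) :
    logDeriv (GammaSeq · n) z = log n - ∑ j ∈ Finset.range (n + 1), 1 / (z + j) := by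
  have hn' : (n : ℂ) ≠ 0 := Nat.cast_ne_zero.mpr hn
  have hpow : (n : ℂ) ^ z ≠ 0 := by simp [cpow_eq_zero_iff, hn']
  have hfact : (n.factorial : ℂ) ≠ 0 := Nat.cast_ne_zero.mpr n.factorial_ne_zero
  have hprod : ∏ j ∈ Finset.range (n + 1), (z + j) ≠ 0 := Finset.prod_ne_zero_iff.mpr fun j _ ↦ hz j
  have hdpow : DifferentiableAt ℂ (fun s : ℂ ↦ (n : ℂ) ^ s) z :=
    differentiableAt_id.const_cpow (.inl hn')
  rw [show (GammaSeq · n) = fun s : ℂ ↦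
      (n : ℂ) ^ s * n.factorial / ∏ j ∈ Finset.range (n + 1), (s + j) from rfl,
    logDeriv_div (f := fun s : ℂ ↦ (n : ℂ) ^ s * n.factorial)
      (g := fun s : ℂ ↦ ∏ j ∈ Finset.range (n + 1), (s + j)) z (mul_ne_zero hpow hfact) hprod
      (hdpow.mul_const _)
      (DifferentiableAt.fun_finsetProd fun j _ ↦ differentiableAt_id.add_const _),
    logDeriv_mul_const z _ hfact, logDeriv_prod (f := fun (j : ℕ) (s : ℂ) ↦ s + j)
      (fun j _ ↦ hz j) (fun j _ ↦ differentiableAt_id.add_const _)]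
  congr 1
  · rw [logDeriv_apply, (hasStrictDerivAt_const_cpow (.inl hn')).hasDerivAt.deriv,
      mul_div_cancel_left₀ _ hpow]
  · refine Finset.sum_congr rfl fun j _ ↦ ?_
    simp [logDeriv_apply]

noncomputable def GammaSeqKernel (n : ℕ) : ℝ → ℝ :=
  indicator (Ioc 0 n) fun t ↦ (1 - t / n) ^ n

lemma GammaSeqKernel_nonneg (n : ℕ) (t : ℝ) : 0 ≤ GammaSeqKernel n t := by
  refine indicator_nonneg (fun t ht ↦ pow_nonneg ?_ n) t
  linarith [div_le_one_of_le₀ ht.2 n.cast_nonneg]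

lemma GammaSeqKernel_le_exp_neg (n : ℕ) (t : ℝ) : GammaSeqKernel n t ≤ Real.exp (-t) := by
  by_cases ht : t ∈ Ioc (0 : ℝ) n
  · rw [GammaSeqKernel, indicator_of_mem ht]
    exact Real.one_sub_div_pow_le_exp_neg ht.2
  · rw [GammaSeqKernel, indicator_of_notMem ht]
    positivity

lemma measurable_GammaSeqKernel (n : ℕ) : Measurable (GammaSeqKernel n) :=
  (by fun_prop : Measurable fun t : ℝ ↦ (1 - t / n) ^ n).indicator measurableSet_Ioc

lemma GammaSeq_eq_integral_GammaSeqKernel {s : ℂ} (hs : 0 < s.re) {n : ℕ} (hn : n ≠ 0) :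
    GammaSeq s n = ∫ t in Ioi (0 : ℝ), (GammaSeqKernel n t : ℂ) * (t : ℂ) ^ (s - 1) := by
  have : ∀ t : ℝ, (GammaSeqKernel n t : ℂ) * (t : ℂ) ^ (s - 1) =
      indicator (Ioc (0 : ℝ) n) (fun t : ℝ ↦ ((1 - t / n) ^ n : ℝ) * (t : ℂ) ^ (s - 1)) t := by
    intro t
    by_cases ht : t ∈ Ioc (0 : ℝ) n <;> simp [GammaSeqKernel, ht]
  simp_rw [this, integral_indicator measurableSet_Ioc,
    Measure.restrict_restrict_of_subset Ioc_subset_Ioi_self,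
    GammaSeq_eq_approx_Gamma_integral hs hn, intervalIntegral.integral_of_le n.cast_nonneg]

lemma integrableOn_mul_cpow_of_le_exp_neg {s : ℂ} (hs : 0 < s.re) {g : ℝ → ℝ} (hg : Measurable g)
    (hg_le : ∀ t, |g t| ≤ Real.exp (-t)) :
    IntegrableOn (fun t : ℝ ↦ (g t : ℂ) * (t : ℂ) ^ (s - 1)) (Ioi 0) := by
  refine (Real.GammaIntegral_convergent hs).mono' ?_ ?_
  · exact (by fun_prop : Measurable fun t : ℝ ↦ (g t : ℂ) * (t : ℂ) ^ (s - 1)).aestronglyMeasurable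
  · filter_upwards [ae_restrict_mem measurableSet_Ioi] with t ht
    rw [norm_mul, norm_real, Real.norm_eq_abs, norm_cpow_eq_rpow_re_of_pos ht, sub_re, one_re]
    exact mul_le_mul_of_nonneg_right (hg_le t) (Real.rpow_nonneg ht.le _)

lemma GammaSeq_sub_Gamma_eq_integral {s : ℂ} (hs : 0 < s.re) {n : ℕ} (hn : n ≠ 0) :
    GammaSeq s n - Gamma s =
      ∫ t in Ioi (0 : ℝ), ((GammaSeqKernel n t - Real.exp (-t) : ℝ) : ℂ) * (t : ℂ) ^ (s - 1) := by
  rw [GammaSeq_eq_integral_GammaSeqKernel hs hn, Gamma_eq_integral hs, GammaIntegral,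
    ← integral_sub (integrableOn_mul_cpow_of_le_exp_neg hs (measurable_GammaSeqKernel n)
      fun t ↦ (abs_of_nonneg (GammaSeqKernel_nonneg n t)).trans_le (GammaSeqKernel_le_exp_neg n t))
      (integrableOn_mul_cpow_of_le_exp_neg hs (by fun_prop) fun t ↦ (Real.abs_exp _).le)]
  push_cast
  simp_rw [sub_mul]

lemma integrableOn_exp_neg_sub_GammaSeqKernel_mul_rpow {c : ℝ} (hc : 0 < c) (n : ℕ) :
    IntegrableOn (fun t ↦ (Real.exp (-t) - GammaSeqKernel n t) * t ^ (c - 1)) (Ioi 0) := by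
  refine (Real.GammaIntegral_convergent hc).mono'
    (((by fun_prop : Measurable fun t : ℝ ↦ Real.exp (-t)).sub (measurable_GammaSeqKernel n)).mul
      (by fun_prop)).aestronglyMeasurable ?_
  filter_upwards [ae_restrict_mem measurableSet_Ioi] with t ht
  have hk₀ := GammaSeqKernel_nonneg n t
  have hk₁ := GammaSeqKernel_le_exp_neg n t
  rw [Real.norm_eq_abs, abs_mul, abs_of_nonneg (Real.rpow_nonneg ht.le _)]
  exact mul_le_mul_of_nonneg_right (abs_le.mpr ⟨by linarith [Real.exp_pos (-t)], by linarith⟩)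
    (Real.rpow_nonneg ht.le _)

lemma norm_GammaSeq_sub_Gamma_ofReal {c : ℝ} (hc : 0 < c) {n : ℕ} (hn : n ≠ 0) :
    ‖GammaSeq c n - Gamma c‖ =
      ∫ t in Ioi (0 : ℝ), (Real.exp (-t) - GammaSeqKernel n t) * t ^ (c - 1) := by
  have hreal (t : ℝ) (ht : 0 < t) :
      ((GammaSeqKernel n t - Real.exp (-t) : ℝ) : ℂ) * (t : ℂ) ^ ((c : ℂ) - 1) =
        ((-((Real.exp (-t) - GammaSeqKernel n t) * t ^ (c - 1)) : ℝ) : ℂ) := by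
    rw [← ofReal_one, ← ofReal_sub, ← ofReal_cpow ht.le]
    push_cast
    ring
  rw [GammaSeq_sub_Gamma_eq_integral (by simpa using hc) hn,
    setIntegral_congr_fun measurableSet_Ioi hreal, integral_complex_ofReal, integral_neg,
    norm_real, norm_neg, Real.norm_eq_abs, abs_of_nonneg]
  refine setIntegral_nonneg measurableSet_Ioi fun t (ht : 0 < t) ↦ ?_
  have := GammaSeqKernel_le_exp_neg n t
  exact mul_nonneg (by linarith) (Real.rpow_nonneg ht.le _)

lemma norm_GammaSeq_sub_Gamma_le {a b : ℝ} (ha : 0 < a) {s : ℂ} (has : a ≤ s.re) (hsb : s.re ≤ b)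
    {n : ℕ} (hn : n ≠ 0) :
    ‖GammaSeq s n - Gamma s‖ ≤ ‖GammaSeq a n - Gamma a‖ + ‖GammaSeq b n - Gamma b‖ := by
  have hia := integrableOn_exp_neg_sub_GammaSeqKernel_mul_rpow ha n
  have hib := integrableOn_exp_neg_sub_GammaSeqKernel_mul_rpow (ha.trans_le (has.trans hsb)) n
  rw [norm_GammaSeq_sub_Gamma_ofReal ha hn,
    norm_GammaSeq_sub_Gamma_ofReal (ha.trans_le (has.trans hsb)) hn, ← integral_add hia hib,
    GammaSeq_sub_Gamma_eq_integral (ha.trans_le has) hn]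
  refine norm_integral_le_of_norm_le (hia.add hib) ?_
  filter_upwards [ae_restrict_mem measurableSet_Ioi] with t ht
  have hk : 0 ≤ Real.exp (-t) - GammaSeqKernel n t := by linarith [GammaSeqKernel_le_exp_neg n t]
  rw [norm_mul, norm_real, Real.norm_eq_abs, abs_sub_comm, abs_of_nonneg hk,
    norm_cpow_eq_rpow_re_of_pos ht, sub_re, one_re, ← mul_add]
  exact mul_le_mul_of_nonneg_left (Real.rpow_le_rpow_add_rpow ht (by linarith) (by linarith)) hk

lemma tendstoLocallyUniformlyOn_GammaSeq :
    TendstoLocallyUniformlyOn (fun n s ↦ GammaSeq s n) Gamma atTop {s | 0 < s.re} := by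
  rw [Metric.tendstoLocallyUniformlyOn_iff]
  intro ε hε x (hx : 0 < x.re)
  have herror (c : ℂ) : Tendsto (fun n ↦ ‖GammaSeq c n - Gamma c‖) atTop (𝓝 0) := by
    simpa using ((GammaSeq_tendsto_Gamma c).sub_const (Gamma c)).norm
  have hedges := (herror (x.re / 2 : ℝ)).add (herror (x.re + 1 : ℝ))
  rw [add_zero] at hedges
  refine ⟨re ⁻¹' Ioo (x.re / 2) (x.re + 1), mem_nhdsWithin_of_mem_nhds <|
    continuous_re.continuousAt.preimage_mem_nhds (Ioo_mem_nhds (by linarith) (by linarith)), ?_⟩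
  filter_upwards [hedges.eventually (gt_mem_nhds hε), eventually_ne_atTop 0] with n hn hn0 y hy
  rw [dist_comm, dist_eq_norm]
  exact (norm_GammaSeq_sub_Gamma_le (by linarith) hy.1.le hy.2.le hn0).trans_lt hn

lemma tendsto_log_sub_sum_digamma {z : ℂ} (hz : 0 < z.re) :
    Tendsto (fun n : ℕ ↦ log n - ∑ j ∈ Finset.range (n + 1), 1 / (z + j)) atTop
      (𝓝 (digamma z)) := by
  refine (logDeriv_tendsto (isOpen_lt continuous_const continuous_re) hz
    tendstoLocallyUniformlyOn_GammaSeq ?_ (Gamma_ne_zero_of_re_pos hz)).congr' ?_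
  · filter_upwards [eventually_ne_atTop 0] with n hn using differentiableOn_GammaSeq hn
  · filter_upwards [eventually_ne_atTop 0] with n hn
      using logDeriv_GammaSeq (add_natCast_ne_zero hz) hn

lemma tendsto_log_add_natCast_sub_log (z : ℂ) :
    Tendsto (fun n : ℕ ↦ log (z + n) - log n) atTop (𝓝 0) := by
  have hone : Tendsto (fun n : ℕ ↦ 1 + z / n) atTop (𝓝 1) := by
    simpa [div_eq_mul_inv] using
      ((tendsto_inv₀_cobounded.comp tendsto_natCast_atTop_cobounded).const_mul z).const_add 1
  have hlog : Tendsto (fun n : ℕ ↦ log (1 + z / n)) atTop (𝓝 0) := by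
    simpa [Function.comp_def] using (continuousAt_clog one_mem_slitPlane).tendsto.comp hone
  refine hlog.congr' ?_
  filter_upwards [eventually_gt_atTop 0, hone.eventually_ne one_ne_zero] with n hn hne
  have hn' : (0 : ℝ) < n := by exact_mod_cast hn
  have hn'' : (n : ℂ) ≠ 0 := Nat.cast_ne_zero.mpr hn.ne'
  rw [show z + n = (n : ℝ) * (1 + z / n) by push_cast; field_simp; ring, log_ofReal_mul hn' hne,
    ← natCast_log]
  ring

lemma tendsto_one_div_add_natCast (z : ℂ) :
    Tendsto (fun n : ℕ ↦ 1 / (z + n)) atTop (𝓝 0) := by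
  simpa [add_comm z, Function.comp_def] using
    tendsto_inv₀_cobounded.comp
      ((tendsto_add_const_cobounded z).comp tendsto_natCast_atTop_cobounded)

end Complex

noncomputable def sawtooth (t : ℝ) : ℝ := ⌊t⌋ - t + 1 / 2

lemma abs_sawtooth_le (t : ℝ) : |sawtooth t| ≤ 1 / 2 := by
  rw [sawtooth, abs_le]
  constructor <;> linarith [Int.floor_le t, Int.lt_floor_add_one t]

lemma measurable_sawtooth : Measurable sawtooth := by
  unfold sawtooth
  fun_prop

lemma sawtooth_of_mem_Ico {n : ℤ} {t : ℝ} (ht : t ∈ Ico (n : ℝ) (n + 1)) :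
    sawtooth t = n + 1 / 2 - t := by
  rw [sawtooth, Int.floor_eq_iff.mpr ht]
  ring

lemma integrableOn_inv_add_sq {a : ℝ} (ha : 0 < a) :
    IntegrableOn (fun t : ℝ ↦ ((t + a) ^ 2)⁻¹) (Ioi 0) := by
  have hderiv (t : ℝ) (ht : 0 < t) : HasDerivAt (fun t ↦ -(t + a)⁻¹) ((t + a) ^ 2)⁻¹ t := by
    have hta : t + a ≠ 0 := by positivity
    refine (((hasDerivAt_id t).add_const a).inv hta).neg.congr_deriv ?_
    rw [neg_div, neg_neg, one_div, id]
  refine integrableOn_Ioi_deriv_of_nonneg (l := 0) (by fun_prop (disch := positivity)) hderiv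
    (fun t _ ↦ by positivity) ?_
  simpa using (tendsto_inv_atTop_zero.comp (tendsto_atTop_add_const_right _ a tendsto_id)).neg

section

variable {z : ℂ}

lemma norm_sawtooth_div_sq_le (hz : 0 < z.re) {t : ℝ} (ht : 0 ≤ t) :
    ‖(sawtooth t : ℂ) / ((t : ℂ) + z) ^ 2‖ ≤ 1 / 2 * ((t + z.re) ^ 2)⁻¹ := by
  have hre : t + z.re ≤ ‖(t : ℂ) + z‖ := by simpa using re_le_norm ((t : ℂ) + z)
  rw [norm_div, norm_pow, norm_real, Real.norm_eq_abs, div_eq_mul_inv]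
  gcongr
  exact abs_sawtooth_le t

lemma integrableOn_sawtooth_div_sq (hz : 0 < z.re) :
    IntegrableOn (fun t : ℝ ↦ (sawtooth t : ℂ) / ((t : ℂ) + z) ^ 2) (Ioi 0) := by
  refine ((integrableOn_inv_add_sq hz).const_mul (1 / 2)).mono'
    ((measurable_ofReal.comp measurable_sawtooth).div (by fun_prop)).aestronglyMeasurable ?_
  filter_upwards [ae_restrict_mem measurableSet_Ioi] with t (ht : 0 < t)
  exact norm_sawtooth_div_sq_le hz ht.le

lemma hasDerivAt_neg_div_sub_log (c : ℂ) {t : ℝ} (ht : (t : ℂ) + z ∈ slitPlane) :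
    HasDerivAt (fun u : ℝ ↦ -(c * ((u : ℂ) + z)⁻¹) - log ((u : ℂ) + z))
      ((c - ((t : ℂ) + z)) / ((t : ℂ) + z) ^ 2) t := by
  have hne : (t : ℂ) + z ≠ 0 := slitPlane_ne_zero ht
  have hlin : HasDerivAt (fun u : ℝ ↦ (u : ℂ) + z) 1 t := (hasDerivAt_id _).ofReal_comp.add_const z
  refine (((hlin.inv hne).const_mul c).neg.sub (hlin.clog_real ht)).congr_deriv ?_
  field_simp

lemma intervalIntegrable_sawtooth_div_sq (hz : 0 < z.re) {a b : ℝ} (ha : 0 ≤ a) (hab : a ≤ b) :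
    IntervalIntegrable (fun t : ℝ ↦ (sawtooth t : ℂ) / ((t : ℂ) + z) ^ 2) volume a b :=
  (intervalIntegrable_iff_integrableOn_Ioc_of_le hab).mpr <|
    (integrableOn_sawtooth_div_sq hz).mono_set fun _ ht ↦ ha.trans_lt ht.1

lemma integral_sawtooth_div_sq_unit (hz : 0 < z.re) (n : ℕ) :
    ∫ t in (n : ℝ)..n + 1, (sawtooth t : ℂ) / ((t : ℂ) + z) ^ 2 =
      (1 / (z + n) + 1 / (z + n + 1)) / 2 - (log (z + n + 1) - log (z + n)) := by
  set c : ℂ := n + 1 / 2 + z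
  have hn : (n : ℝ) ≤ n + 1 := by linarith
  have hslit (t : ℝ) (ht : t ∈ uIcc (n : ℝ) (n + 1)) : (t : ℂ) + z ∈ slitPlane := by
    rw [uIcc_of_le hn] at ht
    exact mem_slitPlane_iff.mpr (.inl (by simp; linarith [(Nat.cast_nonneg n : (0 : ℝ) ≤ n), ht.1]))
  have hprimitive : ∫ t in (n : ℝ)..n + 1, (sawtooth t : ℂ) / ((t : ℂ) + z) ^ 2 =
      ∫ t in (n : ℝ)..n + 1, (c - ((t : ℂ) + z)) / ((t : ℂ) + z) ^ 2 := by
    simp_rw [intervalIntegral.integral_of_le hn, integral_Ioc_eq_integral_Ioo]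
    refine setIntegral_congr_fun measurableSet_Ioo fun t ht ↦ ?_
    rw [sawtooth_of_mem_Ico (n := n) ⟨by exact_mod_cast ht.1.le, by exact_mod_cast ht.2⟩]
    push_cast
    ring
  have hcont : ContinuousOn (fun t : ℝ ↦ (c - ((t : ℂ) + z)) / ((t : ℂ) + z) ^ 2)
      (uIcc (n : ℝ) (n + 1)) :=
    .div (by fun_prop) (by fun_prop) fun t ht ↦ pow_ne_zero 2 (slitPlane_ne_zero (hslit t ht))
  have h₀ : ((n : ℝ) : ℂ) + z = z + n := by push_cast; ring
  have h₁ : (((n : ℝ) + 1 : ℝ) : ℂ) + z = z + n + 1 := by push_cast; ring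
  have hne₀ : z + n ≠ 0 := add_natCast_ne_zero hz n
  have hne₁ : z + n + 1 ≠ 0 := by simpa [add_assoc] using add_natCast_ne_zero hz (n + 1)
  rw [hprimitive, intervalIntegral.integral_eq_sub_of_hasDerivAt
    (fun t ht ↦ hasDerivAt_neg_div_sub_log c (hslit t ht)) hcont.intervalIntegrable, h₀, h₁]
  field_simp
  ring

lemma integral_sawtooth_div_sq_nat (hz : 0 < z.re) (N : ℕ) :
    ∫ t in (0 : ℝ)..N, (sawtooth t : ℂ) / ((t : ℂ) + z) ^ 2 =
      ∑ j ∈ Finset.range (N + 1), 1 / (z + j) - (1 / z + 1 / (z + N)) / 2 -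
        (log (z + N) - log z) := by
  induction N with
  | zero => simp
  | succ N ih =>
    rw [Nat.cast_succ, ← intervalIntegral.integral_add_adjacent_intervals
      (intervalIntegrable_sawtooth_div_sq hz le_rfl N.cast_nonneg)
      (intervalIntegrable_sawtooth_div_sq hz N.cast_nonneg (by linarith)), ih,
      integral_sawtooth_div_sq_unit hz, Finset.sum_range_succ _ (N + 1)]
    push_cast
    ring_nf

end

/-- Stirling-type formula for the digamma function: for `Re z > 0`,
`Γ'(z)/Γ(z) = log z − 1/(2z) − ∫₀^∞ (⌊t⌋ − t + 1/2)/(t+z)² dt`. -/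
theorem digamma_integral_formula (z : ℂ) (hz : 0 < z.re) :
    deriv Complex.Gamma z / Complex.Gamma z =
      Complex.log z - 1 / (2 * z) -
        ∫ t in Set.Ioi (0 : ℝ), ((((⌊t⌋ : ℝ) - t + 1 / 2 : ℝ)) : ℂ) / ((t : ℂ) + z) ^ 2 := by
  have hpartial : Tendsto (fun n : ℕ ↦ log z - 1 / (2 * z) -
      ∫ t in (0 : ℝ)..n, (sawtooth t : ℂ) / ((t : ℂ) + z) ^ 2) atTop (𝓝 (digamma z)) := by
    have := ((tendsto_log_sub_sum_digamma hz).add (tendsto_log_add_natCast_sub_log z)).add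
      ((tendsto_one_div_add_natCast z).div_const 2)
    rw [add_zero, zero_div, add_zero] at this
    refine this.congr fun n ↦ ?_
    rw [integral_sawtooth_div_sq_nat hz n]
    ring
  have himproper := (tendsto_const_nhds (x := log z - 1 / (2 * z))).sub <|
    intervalIntegral_tendsto_integral_Ioi 0 (integrableOn_sawtooth_div_sq hz)
      tendsto_natCast_atTop_atTop
  exact tendsto_nhds_unique hpartial himproper
end
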